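/- arXiv:1909.07313 — 6 statements merged into one kernel-verified Lean document; each statement's English description precedes it below -/
import Mathlib

section
/- Let n ≥ 1 and let B be a finite list of bids on n goods. Then the indirect utility function f_B is convex on ℝ^n if and only if there is no price vector p ∈ ℝ^n and pair of distinct goods i, i' ∈ {0,1,…,n} at which the weights of the bids of B that are marginal on both i and i' at p sum to a negative number; that is, f_B is convex if and only if for every p ∈ ℝ^n and all distinct i, i' ∈ {0,1,…,n}, the sum ∑{ w : (b,w) ∈ B, (b,w) demands both i and i' at p } is non-negative. -/
open Finset

noncomputable section

variable {n : ℕ}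

/-- Extend a value/price vector in `ℝ^n` by a 0-th coordinate (the reject good) equal to 0. -/
def extVec (b : Fin n → ℝ) : Fin (n + 1) → ℝ := Fin.cons 0 b

/-- Surplus of good `i` (in `{0,…,n}`) for value vector `b` at price `p`. -/
def surplus (b p : Fin n → ℝ) (i : Fin (n + 1)) : ℝ := extVec b i - extVec p i

/-- Maximal surplus over all goods (including the reject good). -/
def maxSurplus (b p : Fin n → ℝ) : ℝ :=
  Finset.univ.sup' Finset.univ_nonempty (surplus b p)

/-- The bid with value vector `b` demands good `i` at price `p`. -/
def Demands (b p : Fin n → ℝ) (i : Fin (n + 1)) : Prop :=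
  ∀ j, surplus b p j ≤ surplus b p i

open Classical in
/-- The set of goods demanded by value vector `b` at price `p`. -/
def demandedSet (b p : Fin n → ℝ) : Finset (Fin (n + 1)) :=
  Finset.univ.filter fun i => Demands b p i

/-- Indirect utility function of a bid list (bids are pairs of value vector and weight). -/
def indirectUtility (B : List ((Fin n → ℝ) × ℝ)) (p : Fin n → ℝ) : ℝ :=
  (B.map fun bw => bw.2 * maxSurplus bw.1 p).sum

/-- Surplus gap of the bid `b` at `p`: maximal surplus minus the best surplus on
a non-demanded good (junk value when every good is demanded). -/
def surplusGap (b p : Fin n → ℝ) : ℝ :=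
  maxSurplus b p - sSup (surplus b p '' {i | i ∉ demandedSet b p})

/-- `B` is `ε`-valid at `p` if its indirect utility function is convex on the open
`L∞`-ball of radius `ε` around `p`. -/
def epsValid (B : List ((Fin n → ℝ) × ℝ)) (p : Fin n → ℝ) (ε : ℝ) : Prop :=
  ConvexOn ℝ {q : Fin n → ℝ | ‖q - p‖ < ε} (indirectUtility B)

open Classical in
/-- Sum of the weights of bids in `B` that are marginal on both `i` and `i'` at `p`. -/
def marginalWeight (B : List ((Fin n → ℝ) × ℝ)) (p : Fin n → ℝ) (i i' : Fin (n + 1)) : ℝ :=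
  (B.map fun bw => if Demands bw.1 p i ∧ Demands bw.1 p i' then bw.2 else 0).sum

/-! Each bid contributes `w · max_i (b_i - p_i)`, so along any line through a price `q` the
function `f_B` is affine on both sides of `q`, and its slope jumps by the weighted oscillation
`∑ w (max_D u - min_D u)` of the direction `u` over the demand sets `D` at `q`. Hence `f_B` is
convex iff all these oscillation sums are nonnegative (a maximum principle on segments gives
the converse). Cutting `u` at its values writes an oscillation sum as a nonnegative combination
of crossing weights, the total weights of bids whose demand set meets both of two disjoint sets
of goods; lowering the price of one good splits a crossing weight into two smaller ones, down to
the weights of bids marginal on a pair of goods. Conversely, such a pair weight is itself an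
oscillation sum at a slightly perturbed price. -/

open Filter Topology Set

section Demand

variable {b p q : Fin n → ℝ} {u : Fin (n + 1) → ℝ} {i : Fin (n + 1)}

lemma mem_demandedSet : i ∈ demandedSet b p ↔ Demands b p i := by
  classical
  simp [demandedSet]

lemma surplus_le_maxSurplus (b p : Fin n → ℝ) (j : Fin (n + 1)) :
    surplus b p j ≤ maxSurplus b p :=
  Finset.le_sup' _ (Finset.mem_univ j)

lemma demands_iff_surplus_eq : Demands b p i ↔ surplus b p i = maxSurplus b p :=
  ⟨fun h => le_antisymm (surplus_le_maxSurplus b p i) (Finset.sup'_le _ _ fun j _ => h j),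
    fun h j => h ▸ surplus_le_maxSurplus b p j⟩

lemma demandedSet_nonempty (b p : Fin n → ℝ) : (demandedSet b p).Nonempty := by
  obtain ⟨i, -, hi⟩ := Finset.exists_mem_eq_sup' Finset.univ_nonempty (surplus b p)
  exact ⟨i, mem_demandedSet.2 (demands_iff_surplus_eq.2 hi.symm)⟩

def demandInf (b q : Fin n → ℝ) (u : Fin (n + 1) → ℝ) : ℝ :=
  (demandedSet b q).inf' (demandedSet_nonempty b q) u

def demandSup (b q : Fin n → ℝ) (u : Fin (n + 1) → ℝ) : ℝ :=
  (demandedSet b q).sup' (demandedSet_nonempty b q) u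

def demandOsc (b q : Fin n → ℝ) (u : Fin (n + 1) → ℝ) : ℝ :=
  demandSup b q u - demandInf b q u

lemma demandInf_le (h : Demands b q i) : demandInf b q u ≤ u i :=
  Finset.inf'_le u (mem_demandedSet.2 h)

lemma le_demandSup (h : Demands b q i) : u i ≤ demandSup b q u :=
  Finset.le_sup' u (mem_demandedSet.2 h)

lemma exists_demands_eq_demandInf (b q : Fin n → ℝ) (u : Fin (n + 1) → ℝ) :
    ∃ i, Demands b q i ∧ u i = demandInf b q u := by
  obtain ⟨i, hi, h⟩ := Finset.exists_mem_eq_inf' (demandedSet_nonempty b q) u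
  exact ⟨i, mem_demandedSet.1 hi, h.symm⟩

lemma exists_demands_eq_demandSup (b q : Fin n → ℝ) (u : Fin (n + 1) → ℝ) :
    ∃ i, Demands b q i ∧ u i = demandSup b q u := by
  obtain ⟨i, hi, h⟩ := Finset.exists_mem_eq_sup' (demandedSet_nonempty b q) u
  exact ⟨i, mem_demandedSet.1 hi, h.symm⟩

lemma demandInf_eq {c : ℝ} (hle : ∀ j, Demands b q j → c ≤ u j) (hi : Demands b q i)
    (hc : u i = c) : demandInf b q u = c :=
  le_antisymm (hc ▸ demandInf_le hi) (Finset.le_inf' _ _ fun j hj => hle j (mem_demandedSet.1 hj))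

lemma demandSup_eq {c : ℝ} (hle : ∀ j, Demands b q j → u j ≤ c) (hi : Demands b q i)
    (hc : u i = c) : demandSup b q u = c :=
  le_antisymm (Finset.sup'_le _ _ fun j hj => hle j (mem_demandedSet.1 hj)) (hc ▸ le_demandSup hi)

lemma demandInf_neg (b q : Fin n → ℝ) (u : Fin (n + 1) → ℝ) :
    demandInf b q (-u) = -demandSup b q u := by
  obtain ⟨i, hi, hu⟩ := exists_demands_eq_demandSup b q u
  exact demandInf_eq (fun j hj => neg_le_neg (le_demandSup hj)) hi (by rw [Pi.neg_apply, hu])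

lemma demandOsc_eq_zero (h : ∀ i j, Demands b q i → Demands b q j → u i = u j) :
    demandOsc b q u = 0 := by
  obtain ⟨i, hi, -⟩ := exists_demands_eq_demandInf b q u
  rw [demandOsc, demandSup_eq (fun j hj => (h j i hj hi).le) hi rfl,
    demandInf_eq (fun j hj => (h i j hi hj).le) hi rfl, sub_self]

lemma demandOsc_eq_min_add_max (b q : Fin n → ℝ) (u : Fin (n + 1) → ℝ) (t : ℝ) :
    demandOsc b q u =
      demandOsc b q (fun k => min (u k) t) + demandOsc b q (fun k => max (u k) t) := by
  have hSupMin : demandSup b q (fun k => min (u k) t) = min (demandSup b q u) t :=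
    (Finset.sup'_inf_distrib_right _ u t).symm
  have hInfMin : demandInf b q (fun k => min (u k) t) = min (demandInf b q u) t :=
    (Finset.apply_inf'_eq_inf'_comp _ (· ⊓ t) fun x y => inf_inf_distrib_right x y t).symm
  have hSupMax : demandSup b q (fun k => max (u k) t) = max (demandSup b q u) t :=
    (Finset.apply_sup'_eq_sup'_comp _ (· ⊔ t) fun x y => sup_sup_distrib_right x y t).symm
  have hInfMax : demandInf b q (fun k => max (u k) t) = max (demandInf b q u) t :=
    (Finset.inf'_sup_distrib_right _ u t).symm
  simp only [demandOsc, hSupMin, hInfMin, hSupMax, hInfMax]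
  linarith [min_add_max (demandSup b q u) t, min_add_max (demandInf b q u) t]

open Classical in
lemma demandOsc_ite (A : Finset (Fin (n + 1))) {c d : ℝ} (hcd : c ≤ d) :
    demandOsc b q (fun k => if k ∈ A then d else c) =
      if (∃ i ∈ A, Demands b q i) ∧ (∃ i ∈ Aᶜ, Demands b q i) then d - c else 0 := by
  split_ifs with h
  · obtain ⟨⟨i, hiA, hi⟩, ⟨j, hjA, hj⟩⟩ := h
    rw [Finset.mem_compl] at hjA
    rw [demandOsc, demandSup_eq (c := d) (fun k _ => by split_ifs <;> linarith) hi (if_pos hiA),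
      demandInf_eq (c := c) (fun k _ => by split_ifs <;> linarith) hj (if_neg hjA)]
  · refine demandOsc_eq_zero fun i j hi hj => ?_
    have hij : i ∈ A ↔ j ∈ A :=
      ⟨fun hiA => by_contra fun hjA => h ⟨⟨i, hiA, hi⟩, j, Finset.mem_compl.2 hjA, hj⟩,
        fun hjA => by_contra fun hiA => h ⟨⟨j, hjA, hj⟩, i, Finset.mem_compl.2 hiA, hi⟩⟩
    simp only [hij]

end Demand

section Perturbation

/-- A direction in the goods `{0,…,n}`, shifted so that the reject good's price stays `0`. -/
def priceDir (u : Fin (n + 1) → ℝ) : Fin n → ℝ := fun j => u j.succ - u 0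

lemma priceDir_extVec (v : Fin n → ℝ) : priceDir (extVec v) = v := by
  funext j
  simp [priceDir, extVec]

lemma priceDir_neg (u : Fin (n + 1) → ℝ) : priceDir (-u) = -priceDir u := by
  funext j
  simp only [priceDir, Pi.neg_apply]
  ring

variable {b q : Fin n → ℝ} {u : Fin (n + 1) → ℝ} {ε : ℝ}

lemma surplus_add_smul_priceDir (b q : Fin n → ℝ) (u : Fin (n + 1) → ℝ) (ε : ℝ)
    (i : Fin (n + 1)) :
    surplus b (q + ε • priceDir u) i = surplus b q i + ε * (u 0 - u i) := by
  induction i using Fin.cases with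
  | zero => simp [surplus, extVec]
  | succ j => simp [surplus, extVec, priceDir]; ring

lemma eventually_surplus_lt (b q : Fin n → ℝ) (u : Fin (n + 1) → ℝ) :
    ∀ᶠ ε in 𝓝 (0 : ℝ), ∀ i, ¬ Demands b q i →
      surplus b (q + ε • priceDir u) i < maxSurplus b q + ε * (u 0 - demandInf b q u) := by
  refine eventually_all.2 fun i => ?_
  by_cases hi : Demands b q i
  · exact Eventually.of_forall fun _ h => absurd hi h
  have hlt : surplus b q i < maxSurplus b q :=
    (surplus_le_maxSurplus b q i).lt_of_ne (mt demands_iff_surplus_eq.2 hi)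
  simp only [surplus_add_smul_priceDir]
  exact (ContinuousAt.eventually_lt (by fun_prop) (by fun_prop) (by simpa using hlt)).mono
    fun _ h _ => h

lemma maxSurplus_add_smul_priceDir (hε : 0 ≤ ε) (hlt : ∀ i, ¬ Demands b q i →
      surplus b (q + ε • priceDir u) i < maxSurplus b q + ε * (u 0 - demandInf b q u)) :
    maxSurplus b (q + ε • priceDir u) = maxSurplus b q + ε * (u 0 - demandInf b q u) := by
  refine le_antisymm (Finset.sup'_le _ _ fun i _ => ?_) ?_
  · by_cases hi : Demands b q i
    · rw [surplus_add_smul_priceDir, demands_iff_surplus_eq.1 hi]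
      have := demandInf_le (u := u) hi
      nlinarith
    · exact (hlt i hi).le
  · obtain ⟨i, hi, hu⟩ := exists_demands_eq_demandInf b q u
    calc maxSurplus b q + ε * (u 0 - demandInf b q u) = surplus b (q + ε • priceDir u) i := by
          rw [surplus_add_smul_priceDir, demands_iff_surplus_eq.1 hi, hu]
      _ ≤ _ := surplus_le_maxSurplus _ _ i

lemma demands_add_smul_priceDir_iff (hε : 0 < ε) (hlt : ∀ i, ¬ Demands b q i →
      surplus b (q + ε • priceDir u) i < maxSurplus b q + ε * (u 0 - demandInf b q u))
    (i : Fin (n + 1)) :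
    Demands b (q + ε • priceDir u) i ↔ Demands b q i ∧ u i = demandInf b q u := by
  rw [demands_iff_surplus_eq, maxSurplus_add_smul_priceDir hε.le hlt]
  by_cases hi : Demands b q i
  · rw [surplus_add_smul_priceDir, demands_iff_surplus_eq.1 hi]
    simp [hi, hε.ne']
  · simpa [hi] using (hlt i hi).ne

lemma eventually_perturbation (B : List ((Fin n → ℝ) × ℝ)) (q : Fin n → ℝ)
    (u : Fin (n + 1) → ℝ) :
    ∀ᶠ ε in 𝓝[>] (0 : ℝ), ∀ bw ∈ B,
      maxSurplus bw.1 (q + ε • priceDir u) =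
          maxSurplus bw.1 q + ε * (u 0 - demandInf bw.1 q u) ∧
        ∀ i, Demands bw.1 (q + ε • priceDir u) i ↔
          Demands bw.1 q i ∧ u i = demandInf bw.1 q u := by
  have h := (eventually_all_finite B.finite_toSet).2 fun bw _ => eventually_surplus_lt bw.1 q u
  filter_upwards [self_mem_nhdsWithin, nhdsWithin_le_nhds h] with ε hε hlt bw hbw
  exact ⟨maxSurplus_add_smul_priceDir (le_of_lt hε) (hlt bw hbw),
    demands_add_smul_priceDir_iff hε (hlt bw hbw)⟩

/-- Lowering the prices of the goods in `S` slightly shrinks each demand set meeting `S` to its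
part in `S`, and leaves the other demand sets alone. -/
lemma exists_price_demands_iff (B : List ((Fin n → ℝ) × ℝ)) (q : Fin n → ℝ)
    (S : Finset (Fin (n + 1))) :
    ∃ r, ∀ bw ∈ B, ∀ k, Demands bw.1 r k ↔
      Demands bw.1 q k ∧ (k ∈ S ∨ ∀ j ∈ S, ¬ Demands bw.1 q j) := by
  classical
  set u : Fin (n + 1) → ℝ := fun k => if k ∈ S then 0 else 1
  obtain ⟨ε, h⟩ := (eventually_perturbation B q u).exists
  refine ⟨q + ε • priceDir u, fun bw hbw k => ?_⟩
  have hu : ∀ k, 0 ≤ u k := fun k => by simp only [u]; split_ifs <;> norm_num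
  rw [(h bw hbw).2 k]
  by_cases hS : ∃ j ∈ S, Demands bw.1 q j
  · obtain ⟨j, hjS, hj⟩ := hS
    have hinf : demandInf bw.1 q u = 0 := demandInf_eq (fun k _ => hu k) hj (if_pos hjS)
    simp only [hinf, u]
    have : ¬ ∀ j ∈ S, ¬ Demands bw.1 q j := fun h' => h' j hjS hj
    split_ifs with hk <;> simp [hk, this]
  · simp only [not_exists, not_and] at hS
    have hnotS : ∀ k, Demands bw.1 q k → u k = 1 := fun k hk => if_neg fun h => hS k h hk
    obtain ⟨j, hj, -⟩ := exists_demands_eq_demandInf bw.1 q u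
    rw [demandInf_eq (fun k hk => (hnotS k hk).ge) hj (hnotS j hj)]
    exact ⟨fun h' => ⟨h'.1, Or.inr hS⟩, fun h' => ⟨h'.1, hnotS k h'.1⟩⟩

end Perturbation

section WeightedSums

variable (B : List ((Fin n → ℝ) × ℝ)) (q : Fin n → ℝ)

/-- The right derivative of `indirectUtility B` at `q` in the direction `priceDir u`. -/
def directionalSlope (u : Fin (n + 1) → ℝ) : ℝ :=
  (B.map fun bw => bw.2 * (u 0 - demandInf bw.1 q u)).sum

def oscSum (u : Fin (n + 1) → ℝ) : ℝ :=
  (B.map fun bw => bw.2 * demandOsc bw.1 q u).sum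

open Classical in
def crossingWeight (L U : Finset (Fin (n + 1))) : ℝ :=
  (B.map fun bw =>
    if (∃ i ∈ L, Demands bw.1 q i) ∧ (∃ i ∈ U, Demands bw.1 q i) then bw.2 else 0).sum

lemma eventually_indirectUtility_add_smul_priceDir (u : Fin (n + 1) → ℝ) :
    ∀ᶠ ε in 𝓝[>] (0 : ℝ), indirectUtility B (q + ε • priceDir u) =
      indirectUtility B q + ε * directionalSlope B q u := by
  filter_upwards [eventually_perturbation B q u] with ε h
  rw [indirectUtility, indirectUtility, directionalSlope, ← List.sum_map_mul_left,
    ← List.sum_map_add]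
  congr 1
  refine List.map_congr_left fun bw hbw => ?_
  rw [(h bw hbw).1]
  ring

lemma directionalSlope_add_neg (u : Fin (n + 1) → ℝ) :
    directionalSlope B q u + directionalSlope B q (-u) = oscSum B q u := by
  rw [directionalSlope, directionalSlope, oscSum, ← List.sum_map_add]
  congr 1
  refine List.map_congr_left fun bw _ => ?_
  rw [demandInf_neg, demandOsc, Pi.neg_apply]
  ring

lemma oscSum_eq_min_add_max (u : Fin (n + 1) → ℝ) (t : ℝ) :
    oscSum B q u = oscSum B q (fun k => min (u k) t) + oscSum B q (fun k => max (u k) t) := by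
  rw [oscSum, oscSum, oscSum, ← List.sum_map_add]
  congr 1
  refine List.map_congr_left fun bw _ => ?_
  rw [demandOsc_eq_min_add_max bw.1 q u t]
  ring

lemma oscSum_const (c : ℝ) : oscSum B q (fun _ => c) = 0 := by
  simp [oscSum, demandOsc_eq_zero (u := fun _ => c) fun _ _ _ _ => rfl]

lemma oscSum_ite (A : Finset (Fin (n + 1))) {c d : ℝ} (hcd : c ≤ d) :
    oscSum B q (fun k => if k ∈ A then d else c) = (d - c) * crossingWeight B q A Aᶜ := by
  classical
  rw [oscSum, crossingWeight, ← List.sum_map_mul_left]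
  congr 1
  refine List.map_congr_left fun bw _ => ?_
  rw [demandOsc_ite A hcd]
  split_ifs <;> ring

lemma crossingWeight_comm (L U : Finset (Fin (n + 1))) :
    crossingWeight B q L U = crossingWeight B q U L := by
  classical
  simp only [crossingWeight, and_comm]

lemma crossingWeight_singleton (i i' : Fin (n + 1)) :
    crossingWeight B q {i} {i'} = marginalWeight B q i i' := by
  classical
  simp [crossingWeight, marginalWeight]

lemma crossingWeight_empty_right (L : Finset (Fin (n + 1))) : crossingWeight B q L ∅ = 0 := by
  simp [crossingWeight]

/-- Splitting off one good `a` of `U`: after lowering the price of `a`, the bids demanding `a`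
demand only `a`, hence no longer meet `L`. -/
lemma exists_crossingWeight_insert {L : Finset (Fin (n + 1))} {a : Fin (n + 1)} (ha : a ∉ L)
    (U : Finset (Fin (n + 1))) :
    ∃ r, crossingWeight B q L (insert a U) =
      crossingWeight B q L {a} + crossingWeight B r L U := by
  classical
  obtain ⟨r, hr⟩ := exists_price_demands_iff B q {a}
  refine ⟨r, ?_⟩
  rw [crossingWeight, crossingWeight, crossingWeight, ← List.sum_map_add]
  congr 1
  refine List.map_congr_left fun bw hbw => ?_
  simp only [hr bw hbw, Finset.mem_singleton, forall_eq]
  by_cases haD : Demands bw.1 q a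
  · simp [haD, ha]
  · simp [haD]

end WeightedSums

section Nonnegativity

variable {B : List ((Fin n → ℝ) × ℝ)}

lemma crossingWeight_nonneg_of_forall_singleton {L : Finset (Fin (n + 1))}
    (hL : ∀ q a, a ∉ L → 0 ≤ crossingWeight B q L {a}) {U : Finset (Fin (n + 1))}
    (hLU : Disjoint L U) (q : Fin n → ℝ) : 0 ≤ crossingWeight B q L U := by
  classical
  induction U using Finset.induction_on generalizing q with
  | empty => rw [crossingWeight_empty_right]
  | insert a U _ ih =>
    obtain ⟨haL, hLU⟩ := Finset.disjoint_insert_right.1 hLU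
    obtain ⟨r, hr⟩ := exists_crossingWeight_insert B q haL U
    rw [hr]
    exact add_nonneg (hL q a haL) (ih hLU r)

lemma crossingWeight_nonneg
    (H : ∀ (p : Fin n → ℝ) (i i' : Fin (n + 1)), i ≠ i' → 0 ≤ marginalWeight B p i i')
    {L U : Finset (Fin (n + 1))} (hLU : Disjoint L U) (q : Fin n → ℝ) :
    0 ≤ crossingWeight B q L U := by
  refine crossingWeight_nonneg_of_forall_singleton (fun q a ha => ?_) hLU q
  rw [crossingWeight_comm]
  refine crossingWeight_nonneg_of_forall_singleton (fun q i hi => ?_)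
    (Finset.disjoint_singleton_left.2 ha) q
  rw [crossingWeight_singleton]
  exact H q a i (Ne.symm (Finset.notMem_singleton.1 hi))

/-- Layer cake: cutting `u` at its second largest value `t` leaves a function with fewer values
and a two-valued function, whose oscillation sum is a crossing weight. -/
lemma oscSum_nonneg
    (H : ∀ (p : Fin n → ℝ) (i i' : Fin (n + 1)), i ≠ i' → 0 ≤ marginalWeight B p i i')
    (q : Fin n → ℝ) (u : Fin (n + 1) → ℝ) : 0 ≤ oscSum B q u := by
  classical
  suffices key : ∀ T : Finset ℝ, ∀ u : Fin (n + 1) → ℝ, (∀ k, u k ∈ T) →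
      ∀ q, 0 ≤ oscSum B q u from
    key _ u (fun k => Finset.mem_image_of_mem u (Finset.mem_univ k)) q
  intro T
  induction T using Finset.induction_on_max with
  | empty => exact fun u hu => absurd (hu 0) (Finset.notMem_empty _)
  | insert a s hlt ih =>
    intro u hu q
    rcases s.eq_empty_or_nonempty with rfl | hs
    · have hconst : u = fun _ => a := funext fun k => by simpa using hu k
      rw [hconst, oscSum_const]
    set t := s.max' hs
    have hta : t < a := hlt t (s.max'_mem hs)
    have hmin : ∀ k, min (u k) t ∈ s := fun k => by
      rcases Finset.mem_insert.1 (hu k) with hk | hk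
      · rw [hk, min_eq_right hta.le]
        exact s.max'_mem hs
      · rwa [min_eq_left (s.le_max' _ hk)]
    have hmax : (fun k => max (u k) t) =
        fun k => if k ∈ Finset.univ.filter (u · = a) then a else t := by
      funext k
      rcases Finset.mem_insert.1 (hu k) with hk | hk
      · simp [hk, hta.le]
      · have hkt : u k ≤ t := s.le_max' _ hk
        simp [(hlt _ hk).ne, hkt]
    rw [oscSum_eq_min_add_max B q u t, hmax, oscSum_ite B q _ hta.le]
    exact add_nonneg (ih _ hmin q)
      (mul_nonneg (sub_nonneg.2 hta.le) (crossingWeight_nonneg H disjoint_compl_right q))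

lemma oscSum_nonneg_of_convexOn (hf : ConvexOn ℝ univ (indirectUtility B)) (q : Fin n → ℝ)
    (u : Fin (n + 1) → ℝ) : 0 ≤ oscSum B q u := by
  obtain ⟨ε, hε, hplus, hminus⟩ := (eventually_mem_nhdsWithin.and
    ((eventually_indirectUtility_add_smul_priceDir B q u).and
      (eventually_indirectUtility_add_smul_priceDir B q (-u)))).exists
  have hmid := hf.2 (mem_univ (q + ε • priceDir u)) (mem_univ (q + ε • priceDir (-u)))
    (by norm_num : (0 : ℝ) ≤ 1 / 2) (by norm_num : (0 : ℝ) ≤ 1 / 2) (by norm_num)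
  have hq : (1 / 2 : ℝ) • (q + ε • priceDir u) +
      (1 / 2 : ℝ) • (q + ε • priceDir (-u)) = q := by
    rw [priceDir_neg]
    module
  rw [hq, hplus, hminus, smul_eq_mul, smul_eq_mul] at hmid
  have hε' : (0 : ℝ) < ε := hε
  nlinarith [directionalSlope_add_neg B q u]

/-- Lowering the prices of `i` and `i'` isolates the bids marginal on both: they are the bids
whose demand set then contains `i'` and another good. -/
lemma marginalWeight_nonneg_of_oscSum_nonneg (hosc : ∀ q u, 0 ≤ oscSum B q u)
    (p : Fin n → ℝ) {i i' : Fin (n + 1)} (hii' : i ≠ i') : 0 ≤ marginalWeight B p i i' := by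
  classical
  obtain ⟨r, hr⟩ := exists_price_demands_iff B p {i, i'}
  have hcross : crossingWeight B r {i'} {i'}ᶜ = marginalWeight B p i i' := by
    rw [crossingWeight, marginalWeight]
    congr 1
    refine List.map_congr_left fun bw hbw => if_congr ?_ rfl rfl
    simp only [hr bw hbw, Finset.mem_singleton, exists_eq_left, Finset.mem_compl,
      Finset.mem_insert, forall_eq_or_imp, forall_eq]
    constructor
    · rintro ⟨⟨hi', -⟩, k, hki', hk, (rfl | rfl) | h⟩
      exacts [⟨hk, hi'⟩, absurd rfl hki', absurd hi' h.2]
    · exact fun ⟨hi, hi'⟩ => ⟨⟨hi', by tauto⟩, i, hii', hi, by tauto⟩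
  have := hosc r fun k => if k ∈ ({i'} : Finset (Fin (n + 1))) then 1 else 0
  rwa [oscSum_ite B r _ zero_le_one, sub_zero, one_mul, hcross] at this

end Nonnegativity

section OneDimensional

/-- Near `t`, `g` is affine on each side with right slope `a` and left slope `-b`. -/
def HasConvexKinkAt (g : ℝ → ℝ) (t : ℝ) : Prop :=
  ∃ a b : ℝ, 0 ≤ a + b ∧
    ∀ᶠ ε in 𝓝[>] (0 : ℝ), g (t + ε) = g t + ε * a ∧ g (t - ε) = g t + ε * b

lemma HasConvexKinkAt.sub_affine {g : ℝ → ℝ} {t : ℝ} (h : HasConvexKinkAt g t) (c m : ℝ) :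
    HasConvexKinkAt (fun s => g s - (c + s * m)) t := by
  obtain ⟨a, b, hab, hg⟩ := h
  refine ⟨a - m, b + m, by linarith, hg.mono fun ε ⟨hplus, hminus⟩ => ⟨?_, ?_⟩⟩
  · dsimp only
    rw [hplus]
    ring
  · dsimp only
    rw [hminus]
    ring

/-- A maximum principle: at the largest maximiser of `g` on `[x, y]` both one-sided slopes point
downwards, so a convex kink forces `g` to stay maximal just to the right of it. -/
lemma nonpos_of_hasConvexKinkAt {g : ℝ → ℝ} {x y : ℝ} (hg : ContinuousOn g (Icc x y))
    (hkink : ∀ t ∈ Ioo x y, HasConvexKinkAt g t) (hx : g x ≤ 0) (hy : g y ≤ 0) :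
    ∀ z ∈ Icc x y, g z ≤ 0 := by
  by_contra! ⟨z, hz, hgz⟩
  obtain ⟨t₁, ht₁, hmax⟩ := isCompact_Icc.exists_isMaxOn ⟨z, hz⟩ hg
  set K := Icc x y ∩ g ⁻¹' {g t₁}
  have hK : IsCompact K := isCompact_Icc.of_isClosed_subset
    (hg.preimage_isClosed_of_isClosed isClosed_Icc isClosed_singleton) inter_subset_left
  obtain ⟨t₀, ⟨ht₀, hgt₀⟩, ht₀max⟩ := hK.exists_isGreatest ⟨t₁, ht₁, rfl⟩
  replace hgt₀ : g t₀ = g t₁ := hgt₀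
  have hpos : 0 < g t₀ := hgz.trans_le (hgt₀ ▸ hmax hz)
  have hx₀ : x < t₀ := ht₀.1.lt_of_ne (by rintro rfl; linarith)
  have hy₀ : t₀ < y := ht₀.2.lt_of_ne (by rintro rfl; linarith)
  obtain ⟨a, b, hab, hg₀⟩ := hkink t₀ ⟨hx₀, hy₀⟩
  have hsmall : ∀ c, 0 < c → ∀ᶠ ε in 𝓝[>] (0 : ℝ), ε ∈ Set.Ioo 0 c :=
    fun _ hc => Ioo_mem_nhdsGT hc
  obtain ⟨ε, ⟨hε, hεy⟩, hεx, hplus, hminus⟩ :=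
    ((hsmall _ (sub_pos.2 hy₀)).and ((hsmall _ (sub_pos.2 hx₀)).and hg₀)).exists
  have hle : ∀ s ∈ Icc x y, g s ≤ g t₀ := fun s hs => hgt₀ ▸ hmax hs
  have ha : ε * a ≤ 0 := by linarith [hle (t₀ + ε) ⟨by linarith, by linarith⟩]
  have hb : ε * b ≤ 0 := by linarith [hle (t₀ - ε) ⟨by linarith [hεx.2], by linarith⟩]
  have ha₀ : a = 0 := by nlinarith
  have hmem : t₀ + ε ∈ K :=
    ⟨⟨by linarith, by linarith⟩, by simp [hplus, ha₀, hgt₀]⟩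
  linarith [ht₀max hmem]

lemma convexOn_univ_of_hasConvexKinkAt {g : ℝ → ℝ} (hg : Continuous g)
    (hkink : ∀ t, HasConvexKinkAt g t) : ConvexOn ℝ univ g := by
  refine LinearOrder.convexOn_of_lt convex_univ fun x _ y _ hxy a b ha hb hab => ?_
  set m := (g y - g x) / (y - x)
  have hm : (y - x) * m = g y - g x := mul_div_cancel₀ _ (sub_ne_zero.2 hxy.ne')
  set z := a • x + b • y
  have hzx : z - x = b * (y - x) := by
    simp only [z, smul_eq_mul, eq_sub_of_add_eq hab]
    ring
  have hyz : y - z = a * (y - x) := by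
    simp only [z, smul_eq_mul, eq_sub_of_add_eq hab]
    ring
  have hz : z ∈ Icc x y :=
    ⟨by linarith [mul_pos hb (sub_pos.2 hxy)], by linarith [mul_pos ha (sub_pos.2 hxy)]⟩
  have hchord : g z - (g x - x * m + z * m) ≤ 0 :=
    nonpos_of_hasConvexKinkAt (g := fun s => g s - ((g x - x * m) + s * m)) (by fun_prop)
      (fun t _ => (hkink t).sub_affine _ _) (by simp) (by linarith) z hz
  have hval : g x - x * m + z * m = a • g x + b • g y := calc
    _ = g x + (z - x) * m := by ring
    _ = g x + b * ((y - x) * m) := by rw [hzx]; ring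
    _ = a • g x + b • g y := by rw [hm, smul_eq_mul, smul_eq_mul, eq_sub_of_add_eq hab]; ring
  linarith

end OneDimensional

lemma continuous_indirectUtility (B : List ((Fin n → ℝ) × ℝ)) :
    Continuous (indirectUtility B) := by
  have hext : ∀ i : Fin (n + 1), Continuous fun p : Fin n → ℝ => extVec p i := fun i => by
    induction i using Fin.cases <;> simp only [extVec, Fin.cons_zero, Fin.cons_succ] <;> fun_prop
  refine continuous_list_sum B fun bw _ => continuous_const.mul ?_
  exact Continuous.finset_sup'_apply _ fun i _ => continuous_const.sub (hext i)

lemma convexOn_indirectUtility_of_oscSum_nonneg {B : List ((Fin n → ℝ) × ℝ)}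
    (hosc : ∀ q u, 0 ≤ oscSum B q u) : ConvexOn ℝ univ (indirectUtility B) := by
  refine ⟨convex_univ, fun x _ y _ a b ha hb hab => ?_⟩
  set g : ℝ → ℝ := fun t => indirectUtility B (x + t • (y - x))
  have hkink : ∀ t, HasConvexKinkAt g t := fun t => by
    refine ⟨directionalSlope B (x + t • (y - x)) (extVec (y - x)),
      directionalSlope B (x + t • (y - x)) (-extVec (y - x)), ?_, ?_⟩
    · rw [directionalSlope_add_neg]
      exact hosc _ _
    · filter_upwards [eventually_indirectUtility_add_smul_priceDir B (x + t • (y - x))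
        (extVec (y - x)), eventually_indirectUtility_add_smul_priceDir B (x + t • (y - x))
        (-extVec (y - x))] with ε hplus hminus
      rw [priceDir_neg, priceDir_extVec] at hminus
      rw [priceDir_extVec] at hplus
      refine ⟨?_, ?_⟩
      · simp only [g, ← hplus, add_smul, add_assoc]
      · simp only [g, ← hminus, sub_smul, smul_neg]
        congr 1
        abel
  have hconv := (convexOn_univ_of_hasConvexKinkAt (g := g)
    ((continuous_indirectUtility B).comp (by fun_prop)) hkink).2
    (mem_univ 0) (mem_univ 1) ha hb hab
  have hline : x + b • (y - x) = a • x + b • y := by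
    rw [eq_sub_of_add_eq hab]
    module
  simp only [g, smul_eq_mul, mul_zero, mul_one, zero_add, zero_smul, add_zero, one_smul,
    add_sub_cancel, hline] at hconv
  exact hconv

theorem stmt0_general (n : ℕ) (B : List ((Fin n → ℝ) × ℝ)) :
    ConvexOn ℝ Set.univ (indirectUtility B) ↔
      ∀ (p : Fin n → ℝ) (i i' : Fin (n + 1)), i ≠ i' → 0 ≤ marginalWeight B p i i' :=
  ⟨fun hf p _ _ hii' => marginalWeight_nonneg_of_oscSum_nonneg
      (oscSum_nonneg_of_convexOn hf) p hii',
    fun H => convexOn_indirectUtility_of_oscSum_nonneg (oscSum_nonneg H)⟩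

/-- For a finite list of (±1-weighted) bids on `n ≥ 1` goods, the indirect
utility function `f_B` is convex on `ℝ^n` iff at every price `p` and every pair of distinct
goods `i ≠ i'` in `{0,…,n}`, the weights of the bids marginal on both `i` and `i'` at `p`
sum to a non-negative number. -/
theorem stmt0 (n : ℕ) (hn : 1 ≤ n) (B : List ((Fin n → ℝ) × ℝ))
    (hw : ∀ bw ∈ B, bw.2 = 1 ∨ bw.2 = -1) :
    ConvexOn ℝ Set.univ (indirectUtility B) ↔
      ∀ (p : Fin n → ℝ) (i i' : Fin (n + 1)), i ≠ i' → 0 ≤ marginalWeight B p i i' :=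
  stmt0_general n B

end
end

section
/- Let b ∈ ℤ^n be an integer value vector and p ∈ ℝ^n a price vector, both extended by a 0-th coordinate equal to 0, and let ⌊p⌋ denote the componentwise floor of p (with 0-th coordinate still 0). If i ∈ argmax_{j ∈ {0,…,n}} (b_j − p_j), then i ∈ argmax_{j ∈ {0,…,n}} (b_j − ⌊p_j⌋). In particular, a good demanded by an integral bid at p is also demanded by that bid at ⌊p⌋. -/
open Finset

noncomputable section

variable {n : ℕ}

/-- Let `b ∈ ℤ^n` be an integer value vector and `p ∈ ℝ^n` a price vector
(both extended by a 0-th coordinate equal to 0). If good `i` is demanded by the bid at `p`,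
then `i` is also demanded at the componentwise floor `⌊p⌋` of `p`. -/
theorem stmt9 (n : ℕ) (hn : 1 ≤ n) (b : Fin n → ℤ) (p : Fin n → ℝ) (i : Fin (n + 1))
    (h : Demands (fun k => (b k : ℝ)) p i) :
    Demands (fun k => (b k : ℝ)) (fun k => (⌊p k⌋ : ℝ)) i := by
  have key : ∀ k : Fin (n + 1),
      surplus (fun k => (b k : ℝ)) (fun k => (⌊p k⌋ : ℝ)) k
        = (⌈surplus (fun k => (b k : ℝ)) p k⌉ : ℝ) := by
    intro k
    induction k using Fin.cases with
    | zero => simp [surplus, extVec]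
    | succ m =>
      simp only [surplus, extVec, Fin.cons_succ]
      rw [show ((b m : ℝ) - p m) = -(p m) + (b m : ℤ) from by push_cast; ring,
        Int.ceil_add_intCast, Int.ceil_neg]
      push_cast; ring
  intro j
  rw [key j, key i]
  exact_mod_cast Int.ceil_le_ceil (h j)

end
end

section
/- Let G be an invertible n×n integer matrix each of whose rows is a strong substitutes vector, let R ⊆ {1,…,n} be a set of row indices, and let H be the n×n matrix that agrees with G on the rows in R and whose remaining rows are zero. Then for each column index i, writing h := G^{-1}·H_i (over ℚ), where H_i is the i-th column of H, either h is the 0/1 indicator vector of some set S ⊆ {1,…,n} with i ∈ S, or h is the negative of the 0/1 indicator vector of some set S ⊆ {1,…,n} with i ∉ S. -/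
/-- A strong substitutes vector in `ℤ^m`: nonzero, at most one `+1` entry, at most one `−1`
entry, and all remaining entries `0`. -/
def IsSSVec {m : ℕ} (v : Fin m → ℤ) : Prop :=
  v ≠ 0 ∧ (Finset.univ.filter fun i => v i = 1).card ≤ 1 ∧
    (Finset.univ.filter fun i => v i = -1).card ≤ 1 ∧
    ∀ i, v i = 1 ∨ v i = -1 ∨ v i = 0

lemma ssvec_shape {m : ℕ} {v : Fin m → ℤ} (h : IsSSVec v) :
    (∃ p, ∀ j, v j = if j = p then 1 else 0) ∨
    (∃ q, ∀ j, v j = if j = q then -1 else 0) ∨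
    (∃ p q, p ≠ q ∧ ∀ j, v j = if j = p then 1 else if j = q then -1 else 0) := by
  classical
  obtain ⟨hne, h1, hm1, hv⟩ := h
  have h1' : ∀ a b : Fin m, v a = 1 → v b = 1 → a = b := by
    intro a b ha hb
    exact Finset.card_le_one.mp h1 a (by simp [ha]) b (by simp [hb])
  have hm1' : ∀ a b : Fin m, v a = -1 → v b = -1 → a = b := by
    intro a b ha hb
    exact Finset.card_le_one.mp hm1 a (by simp [ha]) b (by simp [hb])
  by_cases hp : ∃ p, v p = 1
  · obtain ⟨p, hp⟩ := hp
    by_cases hq : ∃ q, v q = -1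
    · obtain ⟨q, hq⟩ := hq
      have hpq : p ≠ q := by intro h; rw [h, hq] at hp; norm_num at hp
      refine Or.inr (Or.inr ⟨p, q, hpq, fun j => ?_⟩)
      rcases eq_or_ne j p with rfl | hjp
      · simp [hp]
      · rcases eq_or_ne j q with rfl | hjq
        · simp [hq, hjp]
        · rcases hv j with h' | h' | h'
          · exact absurd (h1' j p h' hp) hjp
          · exact absurd (hm1' j q h' hq) hjq
          · simp [hjp, hjq, h']
    · refine Or.inl ⟨p, fun j => ?_⟩
      rcases eq_or_ne j p with rfl | hjp
      · simp [hp]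
      · rcases hv j with h' | h' | h'
        · exact absurd (h1' j p h' hp) hjp
        · exact absurd ⟨j, h'⟩ hq
        · simp [hjp, h']
  · by_cases hq : ∃ q, v q = -1
    · obtain ⟨q, hq⟩ := hq
      refine Or.inr (Or.inl ⟨q, fun j => ?_⟩)
      rcases eq_or_ne j q with rfl | hjq
      · simp [hq]
      · rcases hv j with h' | h' | h'
        · exact absurd ⟨j, h'⟩ hp
        · exact absurd (hm1' j q h' hq) hjq
        · simp [hjq, h']
    · exfalso
      apply hne
      funext j
      rcases hv j with h' | h' | h'
      · exact absurd ⟨j, h'⟩ hp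
      · exact absurd ⟨j, h'⟩ hq
      · exact h'

set_option maxHeartbeats 1000000 in
/-- Let `G` be an invertible `n×n` integer matrix whose rows are strong
substitutes vectors, `R` a set of row indices, and `H` the matrix agreeing with `G` on the
rows in `R` and zero on the other rows. Then for every column `i`, the vector
`h = G⁻¹ · H_i` (over `ℚ`) is either the 0/1 indicator vector of a set `S` with `i ∈ S`, or
the negative of the 0/1 indicator vector of a set `S` with `i ∉ S`. -/
theorem stmt11 (n : ℕ) (hn : 1 ≤ n) (G : Matrix (Fin n) (Fin n) ℤ)
    (hG : (G.map (Int.cast : ℤ → ℚ)).det ≠ 0)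
    (hrows : ∀ i, IsSSVec (G i))
    (R : Finset (Fin n)) (i : Fin n) :
    (∃ S : Finset (Fin n), i ∈ S ∧
      (G.map (Int.cast : ℤ → ℚ))⁻¹.mulVec
          (fun k => if k ∈ R then (G k i : ℚ) else 0) =
        fun k => if k ∈ S then 1 else 0) ∨
    (∃ S : Finset (Fin n), i ∉ S ∧
      (G.map (Int.cast : ℤ → ℚ))⁻¹.mulVec
          (fun k => if k ∈ R then (G k i : ℚ) else 0) =
        fun k => -(if k ∈ S then 1 else 0)) := by
  classical
  set A : Matrix (Fin n) (Fin n) ℚ := G.map (Int.cast : ℤ → ℚ) with hA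
  set b : Fin n → ℚ := fun k => if k ∈ R then (G k i : ℚ) else 0 with hb
  set x : Fin n → ℚ := A⁻¹.mulVec b with hxdef
  have hdet : IsUnit A.det := isUnit_iff_ne_zero.mpr hG
  have hx : A.mulVec x = b := by
    rw [hxdef, Matrix.mulVec_mulVec, Matrix.mul_nonsing_inv A hdet, Matrix.one_mulVec]
  have hker : ∀ y : Fin n → ℚ, A.mulVec y = 0 → y = 0 := fun y hy =>
    Matrix.eq_zero_of_mulVec_eq_zero hG hy
  -- key structural fact about each row
  have key : ∀ k : Fin n,
      (∃ p, (∀ y : Fin n → ℚ, A.mulVec y k = y p) ∧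
        x p = (if k ∈ R ∧ i = p then (1:ℚ) else 0)) ∨
      (∃ q, (∀ y : Fin n → ℚ, A.mulVec y k = -(y q)) ∧
        x q = (if k ∈ R ∧ i = q then (1:ℚ) else 0)) ∨
      (∃ p q, p ≠ q ∧ (∀ y : Fin n → ℚ, A.mulVec y k = y p - y q) ∧
        x p - x q = (if k ∈ R ∧ i = p then (1:ℚ) else if k ∈ R ∧ i = q then -1 else 0)) := by
    intro k
    have hbk : A.mulVec x k = b k := congrFun hx k
    rcases ssvec_shape (hrows k) with ⟨p, hp⟩ | ⟨q, hq⟩ | ⟨p, q, hpq, hpqv⟩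
    · left
      have hA' : ∀ j, A k j = if j = p then 1 else 0 := by
        intro j
        simp [hA, Matrix.map_apply, hp j, apply_ite (Int.cast : ℤ → ℚ)]
      have hf : ∀ y : Fin n → ℚ, A.mulVec y k = y p := by
        intro y
        simp [Matrix.mulVec, dotProduct, hA', ite_mul, Finset.sum_ite_eq']
      refine ⟨p, hf, ?_⟩
      rw [← hf x, hbk, hb]
      simp only [hp i]
      push_cast
      split_ifs with h1 h2 h3 <;> tauto
    · right; left
      have hA' : ∀ j, A k j = if j = q then -1 else 0 := by
        intro j
        simp [hA, Matrix.map_apply, hq j, apply_ite (Int.cast : ℤ → ℚ)]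
      have hf : ∀ y : Fin n → ℚ, A.mulVec y k = -(y q) := by
        intro y
        simp [Matrix.mulVec, dotProduct, hA', ite_mul, neg_mul,
          Finset.sum_ite_eq']
      refine ⟨q, hf, ?_⟩
      have := hf x
      rw [hbk, hb] at this
      simp only [hq i] at this
      push_cast at this
      split_ifs at this with h1 h2 <;> split_ifs with h3 <;> first | linarith | tauto
    · right; right
      have hA' : ∀ j, A k j = if j = p then 1 else if j = q then -1 else 0 := by
        intro j
        simp [hA, Matrix.map_apply, hpqv j, apply_ite (Int.cast : ℤ → ℚ)]
      have hf : ∀ y : Fin n → ℚ, A.mulVec y k = y p - y q := by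
        intro y
        have hsplit : ∀ j, A k j * y j =
            (if j = p then y j else 0) + (if j = q then -(y j) else 0) := by
          intro j
          rw [hA' j]
          rcases eq_or_ne j p with rfl | hjp
          · simp [hpq]
          · rcases eq_or_ne j q with rfl | hjq
            · simp [hjp]
            · simp [hjp, hjq]
        simp only [Matrix.mulVec, dotProduct, hsplit, Finset.sum_add_distrib,
          Finset.sum_ite_eq', Finset.mem_univ, if_true]
        ring
      refine ⟨p, q, hpq, hf, ?_⟩
      have := hf x
      rw [hbk, hb] at this
      simp only [hpqv i] at this
      push_cast at this
      rw [← this]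
      split_ifs with h1 h2 h3 h4 h5 <;> first | rfl | tauto
  -- generic kernel argument: no coordinate of x takes a "free" value v
  have hval : ∀ v : ℚ, v ≠ 0 → v ≠ x i → v ≠ x i - 1 → ∀ j, x j ≠ v := by
    intro v hv0 hvi hvi1 j hj
    set U : Finset (Fin n) := Finset.univ.filter (fun j' => x j' = v) with hU
    have hmem : ∀ j', j' ∈ U ↔ x j' = v := by
      intro j'; simp only [hU, Finset.mem_filter, Finset.mem_univ, true_and]
    set χ : Fin n → ℚ := fun j' => if j' ∈ U then 1 else 0 with hχdef
    have hχ : A.mulVec χ = 0 := by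
      funext k
      rw [Pi.zero_apply]
      rcases key k with ⟨p, hf, hxp⟩ | ⟨q, hf, hxq⟩ | ⟨p, q, hpq, hf, hxpq⟩
      · rw [hf χ]
        have hpU : p ∉ U := by
          rw [hmem]
          intro h
          split_ifs at hxp with hc
          · exact hvi (by rw [hc.2]; exact h.symm)
          · exact hv0 (by linarith)
        simp [hχdef, hpU]
      · rw [hf χ]
        have hqU : q ∉ U := by
          rw [hmem]
          intro h
          split_ifs at hxq with hc
          · exact hvi (by rw [hc.2]; exact h.symm)
          · exact hv0 (by linarith)
        simp [hχdef, hqU]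
      · rw [hf χ]
        split_ifs at hxpq with hc1 hc2
        · -- i = p : x p = x i, x q = x i - 1
          have hxp : x p = x i := by rw [← hc1.2]
          have hxq : x q = x i - 1 := by rw [← hxp]; linarith
          have hpU : p ∉ U := by rw [hmem, hxp]; exact fun h => hvi h.symm
          have hqU : q ∉ U := by rw [hmem, hxq]; exact fun h => hvi1 h.symm
          simp [hχdef, hpU, hqU]
        · have hxq : x q = x i := by rw [← hc2.2]
          have hxp : x p = x i - 1 := by rw [← hxq]; linarith
          have hpU : p ∉ U := by rw [hmem, hxp]; exact fun h => hvi1 h.symm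
          have hqU : q ∉ U := by rw [hmem, hxq]; exact fun h => hvi h.symm
          simp [hχdef, hpU, hqU]
        · -- x p = x q : same membership
          have hxeq : x p = x q := by linarith
          have : (p ∈ U) ↔ (q ∈ U) := by rw [hmem, hmem, hxeq]
          by_cases hpU : p ∈ U
          · simp [hχdef, hpU, this.mp hpU]
          · have hqU : q ∉ U := fun h => hpU (this.mpr h)
            simp [hχdef, hpU, hqU]
    have hz := congrFun (hker χ hχ) j
    have hjU : j ∈ U := (hmem j).mpr hj
    simp only [hχdef, hjU, if_true, Pi.zero_apply] at hz
    norm_num at hz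
  -- x i ∈ {0, 1}
  have hxi : x i = 0 ∨ x i = 1 := by
    by_contra hcon
    push_neg at hcon
    obtain ⟨h0, h1⟩ := hcon
    set U : Finset (Fin n) :=
      Finset.univ.filter (fun j' => x j' = x i ∨ x j' = x i - 1) with hU
    have hmem : ∀ j', j' ∈ U ↔ (x j' = x i ∨ x j' = x i - 1) := by
      intro j'; simp only [hU, Finset.mem_filter, Finset.mem_univ, true_and]
    set χ : Fin n → ℚ := fun j' => if j' ∈ U then 1 else 0 with hχdef
    have hχ : A.mulVec χ = 0 := by
      funext k
      rw [Pi.zero_apply]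
      rcases key k with ⟨p, hf, hxp⟩ | ⟨q, hf, hxq⟩ | ⟨p, q, hpq, hf, hxpq⟩
      · rw [hf χ]
        have hpU : p ∉ U := by
          rw [hmem]
          rintro (h | h) <;> split_ifs at hxp with hc
          · exact h1 (by linarith)
          · exact h0 (by linarith)
          · exact h1 (by rw [hc.2]; exact hxp)
          · exact h1 (by linarith)
        simp [hχdef, hpU]
      · rw [hf χ]
        have hqU : q ∉ U := by
          rw [hmem]
          rintro (h | h) <;> split_ifs at hxq with hc
          · exact h1 (by linarith)
          · exact h0 (by linarith)
          · exact h1 (by rw [hc.2]; exact hxq)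
          · exact h1 (by linarith)
        simp [hχdef, hqU]
      · rw [hf χ]
        split_ifs at hxpq with hc1 hc2
        · have hxp : x p = x i := by rw [← hc1.2]
          have hxq : x q = x i - 1 := by rw [← hxp]; linarith
          have hpU : p ∈ U := (hmem p).mpr (Or.inl hxp)
          have hqU : q ∈ U := (hmem q).mpr (Or.inr hxq)
          simp [hχdef, hpU, hqU]
        · have hxq : x q = x i := by rw [← hc2.2]
          have hxp : x p = x i - 1 := by rw [← hxq]; linarith
          have hpU : p ∈ U := (hmem p).mpr (Or.inr hxp)
          have hqU : q ∈ U := (hmem q).mpr (Or.inl hxq)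
          simp [hχdef, hpU, hqU]
        · have hxeq : x p = x q := by linarith
          have : (p ∈ U) ↔ (q ∈ U) := by rw [hmem, hmem, hxeq]
          by_cases hpU : p ∈ U
          · simp [hχdef, hpU, this.mp hpU]
          · have hqU : q ∉ U := fun h => hpU (this.mpr h)
            simp [hχdef, hpU, hqU]
    have hz := congrFun (hker χ hχ) i
    have hiU : i ∈ U := (hmem i).mpr (Or.inl rfl)
    simp only [hχdef, hiU, if_true, Pi.zero_apply] at hz
    norm_num at hz
  rcases hxi with h0 | h1
  · right
    refine ⟨Finset.univ.filter (fun j => x j = -1), ?_, ?_⟩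
    · simp [h0]
    · funext j
      have hj : x j = 0 ∨ x j = -1 := by
        by_contra hc
        push_neg at hc
        exact hval (x j) hc.1 (by rw [h0]; exact hc.1) (by rw [h0]; norm_num [hc.2]) j rfl
      rcases hj with h | h <;> simp [← hxdef, h, Finset.mem_filter] <;> norm_num [h]
  · left
    refine ⟨Finset.univ.filter (fun j => x j = 1), ?_, ?_⟩
    · simp [h1]
    · funext j
      have hj : x j = 0 ∨ x j = 1 := by
        by_contra hc
        push_neg at hc
        exact hval (x j) hc.1 (by rw [h1]; exact hc.2) (by rw [h1]; norm_num [hc.1]) j rfl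
      rcases hj with h | h <;> simp [← hxdef, h, Finset.mem_filter] <;> norm_num [h]
end

section
/- Let k ≥ 2, let i_1, …, i_k be pairwise distinct goods, let b^1, …, b^k ∈ ℝ^{n+1} be value vectors and p ∈ ℝ^{n+1} a price vector satisfying the marginality equations b^l_{i_l} − p_{i_l} = b^l_{i_{l+1}} − p_{i_{l+1}} for l = 1, …, k−1 and b^k_{i_k} − p_{i_k} = b^k_{i_1} − p_{i_1}. Fix ε ≠ 0 and a set T ⊆ {1,…,k} with 1 ∈ T and k ∉ T, and define shifted value vectors b̃^l := b^l + ε·e^{i_1} for l ∈ T and b̃^l := b^l for l ∉ T, where e^{i_1} is the standard basis vector of coordinate i_1. Then there is no price vector p' ∈ ℝ^{n+1} such that b̃^l_{i_l} − p'_{i_l} = b̃^l_{i_{l+1}} − p'_{i_{l+1}} for all l = 1, …, k−1 and b̃^k_{i_k} − p'_{i_k} = b̃^k_{i_1} − p'_{i_1}. In other words, shifting the bid marginal between goods i_1 and i_2 (but not the bid marginal between goods i_k and i_1) by ε in coordinate i_1 destroys at least one marginality in the cycle at every price. -/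
/-- Shift the value vectors `b^l` with `l ∈ T` by `ε` in coordinate `e`; leave the others
unchanged. -/
def shiftBids {n : ℕ} (T : Finset ℕ) (e : Fin (n + 1)) (ε : ℝ)
    (b : ℕ → Fin (n + 1) → ℝ) : ℕ → Fin (n + 1) → ℝ :=
  fun l j => if l ∈ T then b l j + (if j = e then ε else 0) else b l j

/-- Let `k ≥ 2`, let `i_1, …, i_k` be pairwise distinct goods, and let
`b^1, …, b^k`, `p` satisfy the cycle of marginality equations. Fix `ε ≠ 0` and
`T ⊆ {1,…,k}` with `1 ∈ T` and `k ∉ T`, and shift `b^l` by `ε·e^{i_1}` for `l ∈ T`. Then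
there is no price vector `p'` at which all the marginality equations hold for the shifted
value vectors: shifting the bid marginal between `i_1` and `i_2` (but not the one marginal
between `i_k` and `i_1`) destroys at least one marginality in the cycle at every price. -/
theorem stmt16 (n k : ℕ) (hk : 2 ≤ k)
    (idx : ℕ → Fin (n + 1))
    (hdist : ∀ l ∈ Finset.Icc 1 k, ∀ m ∈ Finset.Icc 1 k, idx l = idx m → l = m)
    (b : ℕ → Fin (n + 1) → ℝ) (p : Fin (n + 1) → ℝ)
    (hmarg : ∀ l, 1 ≤ l → l ≤ k - 1 →
      b l (idx l) - p (idx l) = b l (idx (l + 1)) - p (idx (l + 1)))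
    (hlast : b k (idx k) - p (idx k) = b k (idx 1) - p (idx 1))
    (ε : ℝ) (hε : ε ≠ 0)
    (T : Finset ℕ) (hT : T ⊆ Finset.Icc 1 k) (h1T : 1 ∈ T) (hkT : k ∉ T) :
    ¬ ∃ p' : Fin (n + 1) → ℝ,
      (∀ l, 1 ≤ l → l ≤ k - 1 →
        shiftBids T (idx 1) ε b l (idx l) - p' (idx l) =
          shiftBids T (idx 1) ε b l (idx (l + 1)) - p' (idx (l + 1))) ∧
      shiftBids T (idx 1) ε b k (idx k) - p' (idx k) =
        shiftBids T (idx 1) ε b k (idx 1) - p' (idx 1) := by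
  rintro ⟨p', hm', hl'⟩
  set d : ℕ → ℝ := fun l => p' (idx l) - p (idx l) with hd
  have hinj : ∀ l, 1 ≤ l → l ≤ k → idx l = idx 1 → l = 1 := fun l h1 h2 h =>
    hdist l (Finset.mem_Icc.mpr ⟨h1, h2⟩) 1 (Finset.mem_Icc.mpr ⟨le_refl 1, by omega⟩) h
  have h2ne : idx 2 ≠ idx 1 := fun h => by have := hinj 2 (by omega) hk h; omega
  have e1 := hm' 1 le_rfl (by omega)
  have e1' := hmarg 1 le_rfl (by omega)
  simp only [shiftBids, h1T, if_true, h2ne, if_false, if_pos rfl, add_zero] at e1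
  have F1 : d 1 - d 2 = ε := by simp only [hd]; linarith
  have F2 : ∀ l, 2 ≤ l → l ≤ k - 1 → d l = d (l + 1) := by
    intro l hl2 hlk
    have hne1 : idx l ≠ idx 1 := fun h => by have := hinj l (by omega) (by omega) h; omega
    have hne2 : idx (l + 1) ≠ idx 1 := fun h => by
      have := hinj (l + 1) (by omega) (by omega) h; omega
    have e := hm' l (by omega) hlk
    have e' := hmarg l (by omega) hlk
    simp only [shiftBids, hne1, hne2, if_false, add_zero, ite_self] at e
    simp only [hd]; linarith
  have F2' : ∀ l, 2 ≤ l → l ≤ k → d 2 = d l := by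
    intro l hl2
    induction l, hl2 using Nat.le_induction with
    | base => intro _; rfl
    | succ m hm ih => intro hmk; rw [ih (by omega), F2 m hm (by omega)]
  have F3 : d k = d 1 := by
    simp only [shiftBids, hkT, if_false] at hl'
    simp only [hd]; linarith
  have := F2' k (by omega) le_rfl
  apply hε
  linarith
end

section
/- Fix n ≥ 2, distinct goods i, j ∈ {1,…,n}, a value vector b ∈ ℤ^n with b ≥ 0, and integers λ_i, λ_j, λ with 1 ≤ λ_i ≤ b_i − 1, 1 ≤ λ_j ≤ b_j − 1 and λ ≥ 1. Then the bid list consisting of the negative bid (b, −1) together with the three positive bids (b − λ_i·e^i, +1), (b − λ_j·e^j, +1) and (b + λ·1, +1) is valid; that is, its indirect utility function is convex on ℝ^n. Here e^i, e^j are standard basis vectors and 1 is the all-ones vector. -/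
open Finset

noncomputable section

variable {n : ℕ}

/-! Write `y p` and `z p` for the best surplus over the real goods of the two lowered bids
`b − λ_i e^i` and `b − λ_j e^j`. Since `i ≠ j`, every good keeps its full value in one of them,
so the best real surplus of `b` is `max y z`, and that of `b + λ·1` is `max y z + λ`.
A case split then collapses the indirect utility to `max (0, y + λ, z + λ, y + z + λ)`,
a maximum of convex functions because `y` and `z` are maxima of affine functions of `p`. -/

namespace Finset

theorem sup'_sup {α ι : Type*} [SemilatticeSup α] {s : Finset ι} (hs : s.Nonempty)
    (f g : ι → α) : s.sup' hs (f ⊔ g) = s.sup' hs f ⊔ s.sup' hs g :=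
  eq_of_forall_ge_iff fun c => by
    simp only [sup'_le_iff, sup_le_iff, Pi.sup_apply, forall_and]

end Finset

theorem ConvexOn.finset_sup' {𝕜 E β ι : Type*} [Semiring 𝕜] [PartialOrder 𝕜] [AddCommMonoid E]
    [SMul 𝕜 E] [AddCommMonoid β] [LinearOrder β] [IsOrderedAddMonoid β] [Module 𝕜 β]
    [PosSMulStrictMono 𝕜 β] {s : Set E} {t : Finset ι} (ht : t.Nonempty) {f : ι → E → β}
    (hf : ∀ i ∈ t, ConvexOn 𝕜 s (f i)) : ConvexOn 𝕜 s (t.sup' ht f) := by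
  induction ht using Finset.Nonempty.cons_induction with
  | singleton a => simpa using hf a (mem_singleton_self a)
  | cons a t ha ht ih =>
    rw [sup'_cons ht]
    simp only [mem_cons, forall_eq_or_imp] at hf
    exact hf.1.sup (ih hf.2)

theorem convexOn_sup'_sub {ι : Type*} [Fintype ι] [Nonempty ι] (c : ι → ℝ) :
    ConvexOn ℝ Set.univ fun p : ι → ℝ => univ.sup' univ_nonempty (c - p) := by
  have hf : ∀ k ∈ (univ : Finset ι), ConvexOn ℝ Set.univ fun p : ι → ℝ => c k - p k :=
    fun k _ => (convexOn_const (c k) convex_univ).sub ((LinearMap.proj k).concaveOn convex_univ)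
  refine (ConvexOn.finset_sup' univ_nonempty hf).congr fun p _ => ?_
  rw [Finset.sup'_apply]
  rfl

theorem sup'_sub_eq_max_of_ne {ι : Type*} [Fintype ι] [Nonempty ι] [DecidableEq ι] {i j : ι}
    (hij : i ≠ j) {li lj : ℝ} (hli : 0 ≤ li) (hlj : 0 ≤ lj) (c p : ι → ℝ) :
    univ.sup' univ_nonempty (c - p)
      = max (univ.sup' univ_nonempty ((fun k => c k - if k = i then li else 0) - p))
          (univ.sup' univ_nonempty ((fun k => c k - if k = j then lj else 0) - p)) := by
  rw [← sup'_sup]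
  congr 1
  funext k
  simp only [Pi.sub_apply, Pi.sup_apply]
  by_cases hki : k = i
  · rw [if_pos hki, if_neg (hki ▸ hij), sub_zero, max_eq_right (by linarith)]
  · rw [if_neg hki, sub_zero, max_eq_left (by split_ifs <;> linarith)]

theorem maxSurplus_eq_max_zero_sup' [NeZero n] (b p : Fin n → ℝ) :
    maxSurplus b p = max 0 (univ.sup' univ_nonempty (b - p)) := by
  simp only [maxSurplus, Fin.univ_succ]
  rw [sup'_cons (by simp), sup'_map]
  congr 1
  simp [surplus, extVec]

theorem maxSurplus_add_const [NeZero n] (b p : Fin n → ℝ) (l : ℝ) :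
    maxSurplus (fun k => b k + l) p = max 0 (univ.sup' univ_nonempty (b - p) + l) := by
  rw [maxSurplus_eq_max_zero_sup', sup'_add]
  congr 2
  funext k
  simp only [Pi.sub_apply]
  ring

theorem max_zero_add_max_zero_add_sub_eq {y z l : ℝ} (hl : 0 ≤ l) :
    max 0 y + max 0 z + max 0 (max y z + l) - max 0 (max y z)
      = max (max 0 (y + l)) (max (z + l) (y + z + l)) := by
  simp only [max_def]
  split_ifs <;> linarith

theorem convexOn_indirectUtility_lower_lower_raise {i j : Fin n} (hij : i ≠ j) {li lj lam : ℝ}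
    (hli : 0 ≤ li) (hlj : 0 ≤ lj) (hlam : 0 ≤ lam) (b : Fin n → ℝ) :
    ConvexOn ℝ Set.univ (indirectUtility
      [(b, -1),
       ((fun k => b k - if k = i then li else 0), 1),
       ((fun k => b k - if k = j then lj else 0), 1),
       ((fun k => b k + lam), 1)]) := by
  have : NeZero n := NeZero.of_pos i.pos
  set bi : Fin n → ℝ := fun k => b k - if k = i then li else 0
  set bj : Fin n → ℝ := fun k => b k - if k = j then lj else 0
  set y : (Fin n → ℝ) → ℝ := fun p => univ.sup' univ_nonempty (bi - p)
  set z : (Fin n → ℝ) → ℝ := fun p => univ.sup' univ_nonempty (bj - p)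
  have hutil : indirectUtility [(b, -1), (bi, 1), (bj, 1), ((fun k => b k + lam), 1)]
      = fun p => max (max 0 (y p + lam)) (max (z p + lam) (y p + z p + lam)) := by
    funext p
    rw [← max_zero_add_max_zero_add_sub_eq hlam]
    simp only [indirectUtility, List.map_cons, List.map_nil, List.sum_cons, List.sum_nil]
    rw [maxSurplus_eq_max_zero_sup', maxSurplus_eq_max_zero_sup', maxSurplus_eq_max_zero_sup',
      maxSurplus_add_const, sup'_sub_eq_max_of_ne hij hli hlj]
    ring
  rw [hutil]
  exact ((convexOn_const 0 convex_univ).sup ((convexOn_sup'_sub bi).add_const _)).sup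
    (((convexOn_sup'_sub bj).add_const _).sup
      (((convexOn_sup'_sub bi).add (convexOn_sup'_sub bj)).add_const _))

theorem stmt17_general (n : ℕ) (i j : Fin n) (hij : i ≠ j)
    (b : Fin n → ℤ)
    (li lj lam : ℤ) (hli : 1 ≤ li)
    (hlj : 1 ≤ lj) (hlam : 1 ≤ lam) :
    ConvexOn ℝ Set.univ (indirectUtility
      [((fun k => (b k : ℝ)), -1),
       ((fun k => (b k : ℝ) - if k = i then (li : ℝ) else 0), 1),
       ((fun k => (b k : ℝ) - if k = j then (lj : ℝ) else 0), 1),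
       ((fun k => (b k : ℝ) + (lam : ℝ)), 1)]) :=
  convexOn_indirectUtility_lower_lower_raise hij (by exact_mod_cast (by omega : (0 : ℤ) ≤ li))
    (by exact_mod_cast (by omega : (0 : ℤ) ≤ lj)) (by exact_mod_cast (by omega : (0 : ℤ) ≤ lam)) _

/-- For `n ≥ 2`, distinct goods `i ≠ j`, an integral value vector
`b ≥ 0` and integers `λ_i, λ_j, λ` with `1 ≤ λ_i ≤ b_i − 1`, `1 ≤ λ_j ≤ b_j − 1` and
`λ ≥ 1`, the bid list consisting of the negative bid `(b, −1)` and the three positive bids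
`(b − λ_i·e^i, +1)`, `(b − λ_j·e^j, +1)`, `(b + λ·1, +1)` is valid: its indirect utility
function is convex on `ℝ^n`. -/
theorem stmt17 (n : ℕ) (hn : 2 ≤ n) (i j : Fin n) (hij : i ≠ j)
    (b : Fin n → ℤ) (hb : ∀ k, 0 ≤ b k)
    (li lj lam : ℤ) (hli : 1 ≤ li) (hli' : li ≤ b i - 1)
    (hlj : 1 ≤ lj) (hlj' : lj ≤ b j - 1) (hlam : 1 ≤ lam) :
    ConvexOn ℝ Set.univ (indirectUtility
      [((fun k => (b k : ℝ)), -1),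
       ((fun k => (b k : ℝ) - if k = i then (li : ℝ) else 0), 1),
       ((fun k => (b k : ℝ) - if k = j then (lj : ℝ) else 0), 1),
       ((fun k => (b k : ℝ) + (lam : ℝ)), 1)]) :=
  stmt17_general n i j hij b li lj lam hli hlj hlam

end
end

section
/- Let f be a submodular set function on the subsets of {1,…,n} with values in ℝ, i.e. f(S) + f(T) ≥ f(S ∪ T) + f(S ∩ T) for all S, T. Let S be a minimiser of f, and for each v ∈ S let S_v be a minimiser of f over all subsets of {1,…,n} not containing v. Then the set S_0 := { v ∈ S : f(S_v) > f(S) } equals the intersection of all minimisers of f, and S_0 is itself a minimiser of f; in particular, S_0 is the unique inclusion-wise minimal minimiser of f. -/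
/-!
Minimisers of a submodular function are closed under intersection: if `A` and `B` are
minimisers then `f (A ∩ B) ≤ f A + f B - f (A ∪ B) ≤ f B`. Hence, over a finite ground set,
the intersection of all minimisers is itself a minimiser. An element `v` of the minimiser `S`
lies in every minimiser exactly when no minimiser avoids it, i.e. when the best value `f (S_v)`
attainable without `v` exceeds `f S`.
-/

def IsSubmodular {β M : Type*} [Lattice β] [Add M] [LE M] (f : β → M) : Prop :=
  ∀ a b, f (a ⊔ b) + f (a ⊓ b) ≤ f a + f b

theorem IsSubmodular.infClosed_minimisers {β M : Type*} [Lattice β] [AddCommMonoid M]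
    [PartialOrder M] [IsOrderedCancelAddMonoid M] {f : β → M} (hf : IsSubmodular f) :
    InfClosed {a | ∀ b, f a ≤ f b} := by
  intro a ha b hb c
  have : f (a ⊔ b) + f (a ⊓ b) ≤ f (a ⊔ b) + f b :=
    (hf a b).trans (add_le_add_left (ha (a ⊔ b)) _)
  exact (le_of_add_le_add_left this).trans (hb c)

theorem mem_and_lt_iff_forall_minimiser_mem {α M : Type*} [LinearOrder M] {f : Finset α → M}
    {S : Finset α} (hS : ∀ T, f S ≤ f T) {v : α} {Sv : Finset α}
    (hSv : v ∈ S → v ∉ Sv ∧ ∀ T, v ∉ T → f Sv ≤ f T) :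
    v ∈ S ∧ f S < f Sv ↔ ∀ T, (∀ T', f T ≤ f T') → v ∈ T := by
  constructor
  · rintro ⟨hvS, hlt⟩ T hT
    by_contra hvT
    exact (hlt.trans_le ((hSv hvS).2 T hvT)).not_ge (hT S)
  · intro h
    have hvS := h S hS
    exact ⟨hvS, lt_of_not_ge fun hle => (hSv hvS).1 (h Sv fun T => hle.trans (hS T))⟩

open Classical in
/-- Let `f` be a real-valued submodular set function on subsets of
`{1,…,n}`, let `S` be a minimiser of `f`, and for each `v ∈ S` let `S_v` be a minimiser of
`f` over all subsets not containing `v`. Then `S₀ := {v ∈ S : f(S_v) > f(S)}` equals the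
intersection of all minimisers of `f`, and `S₀` is itself a minimiser of `f`; in particular
`S₀` is the unique inclusion-wise minimal minimiser of `f`. -/
theorem stmt19 (n : ℕ) (f : Finset (Fin n) → ℝ)
    (hsub : ∀ S T : Finset (Fin n), f (S ∪ T) + f (S ∩ T) ≤ f S + f T)
    (S : Finset (Fin n)) (hS : ∀ T, f S ≤ f T)
    (Sv : Fin n → Finset (Fin n))
    (hSv : ∀ v ∈ S, v ∉ Sv v ∧ ∀ T : Finset (Fin n), v ∉ T → f (Sv v) ≤ f T) :
    (∀ v : Fin n, v ∈ S.filter (fun w => f S < f (Sv w)) ↔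
      ∀ T : Finset (Fin n), (∀ T', f T ≤ f T') → v ∈ T) ∧
    (∀ T : Finset (Fin n), f (S.filter (fun w => f S < f (Sv w))) ≤ f T) := by
  have hS₀ : ∀ v, v ∈ S.filter (fun w => f S < f (Sv w)) ↔
      ∀ T : Finset (Fin n), (∀ T', f T ≤ f T') → v ∈ T := fun v => by
    rw [Finset.mem_filter]
    exact mem_and_lt_iff_forall_minimiser_mem hS (hSv v)
  let minimisers := Finset.univ.filter fun T : Finset (Fin n) => ∀ T', f T ≤ f T'
  have hne : minimisers.Nonempty := ⟨S, Finset.mem_filter.mpr ⟨Finset.mem_univ S, hS⟩⟩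
  have hS₀_eq : S.filter (fun w => f S < f (Sv w)) = minimisers.inf' hne id := by
    ext v
    simp [hS₀ v, minimisers]
  refine ⟨hS₀, ?_⟩
  rw [hS₀_eq]
  exact IsSubmodular.infClosed_minimisers hsub |>.finsetInf'_mem hne
    fun T hT => (Finset.mem_filter.mp hT).2
end
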